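/- For any set X, the triple (𝔐(X), ⌊·⌋, i_X), where i_X : X → 𝔐(X) is the natural embedding, is the free operated monoid on X: for every operated monoid (M, P) and every map f : X → M there is a unique monoid homomorphism f̄ : 𝔐(X) → M satisfying f̄(⌊w⌋) = P(f̄(w)) for all w ∈ 𝔐(X) and f̄ ∘ i_X = f. -/
import Mathlib


universe u v w

/-- Letters of bracketed words in `X`: either a variable from `X` or a bracket
`⌊u⌋` enclosing a (bracketed) word `u`. Lists of letters are exactly the bracketed
words, i.e. the elements of the free operated monoid `𝔐(X)`. -/
inductive Lt (X : Type u) : Type u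
  | var : X → Lt X
  | brk : List (Lt X) → Lt X

variable {X : Type u} {M : Type w} [Monoid M]

mutual
def ltEval (P : M → M) (f : X → M) : Lt X → M
  | .var x => f x
  | .brk l => P (listEval P f l)
def listEval (P : M → M) (f : X → M) : List (Lt X) → M
  | [] => 1
  | a :: t => ltEval P f a * listEval P f t
end

theorem listEval_eq (P : M → M) (f : X → M) (l : List (Lt X)) :
    listEval P f l = (l.map (ltEval P f)).prod := by
  induction l with
  | nil => rfl
  | cons a t ih => rw [listEval, List.map_cons, List.prod_cons, ih]

mutual
theorem key (P : M → M) (f : X → M) (ψ : FreeMonoid (Lt X) →* M)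
    (h1 : ∀ w : FreeMonoid (Lt X),
      ψ (FreeMonoid.of (Lt.brk (FreeMonoid.toList w))) = P (ψ w))
    (h2 : ∀ x : X, ψ (FreeMonoid.of (Lt.var x)) = f x) :
    ∀ a : Lt X, ψ (FreeMonoid.of a) = ltEval P f a
  | .var x => h2 x
  | .brk l => by
      have hw := h1 (FreeMonoid.ofList l)
      simp only [FreeMonoid.toList_ofList] at hw
      rw [hw, ltEval, keyList P f ψ h1 h2 l]
theorem keyList (P : M → M) (f : X → M) (ψ : FreeMonoid (Lt X) →* M)
    (h1 : ∀ w : FreeMonoid (Lt X),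
      ψ (FreeMonoid.of (Lt.brk (FreeMonoid.toList w))) = P (ψ w))
    (h2 : ∀ x : X, ψ (FreeMonoid.of (Lt.var x)) = f x) :
    ∀ l : List (Lt X), ψ (FreeMonoid.ofList l) = listEval P f l
  | [] => map_one ψ
  | a :: t => by
      have : FreeMonoid.ofList (a :: t) = FreeMonoid.of a * FreeMonoid.ofList t := rfl
      rw [this, map_mul, key P f ψ h1 h2 a, keyList P f ψ h1 h2 t, listEval]
end

/-- `(𝔐(X), ⌊·⌋, i_X)`, realized as the free monoid on the type of
letters `Lt X` with bracket operator `w ↦ ⌊w⌋` and `i_X = x ↦ (x : word)`, is the free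
operated monoid on `X`: for every monoid `M` with an operator `P : M → M` and every map
`f : X → M` there is a unique monoid homomorphism `φ : 𝔐(X) → M` with
`φ(⌊w⌋) = P(φ(w))` for all bracketed words `w` and `φ ∘ i_X = f`. -/
theorem stmt0_free_operated_monoid (X : Type u) (M : Type w) [Monoid M]
    (P : M → M) (f : X → M) :
    ∃! φ : FreeMonoid (Lt X) →* M,
      (∀ w : FreeMonoid (Lt X),
          φ (FreeMonoid.of (Lt.brk (FreeMonoid.toList w))) = P (φ w)) ∧
      (∀ x : X, φ (FreeMonoid.of (Lt.var x)) = f x) := by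
  refine ⟨FreeMonoid.lift (ltEval P f), ⟨?_, ?_⟩, ?_⟩
  · intro w
    rw [FreeMonoid.lift_eval_of, ltEval, listEval_eq, FreeMonoid.lift_apply]
  · intro x
    rw [FreeMonoid.lift_eval_of, ltEval]
  · intro ψ ⟨h1, h2⟩
    ext a
    rw [key P f ψ h1 h2 a, FreeMonoid.lift_eval_of]
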